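/- Let n ≥ 1 and let (a_1,…,a_{n+1}) be Lüroth digits with a_j ≥ 2 for all j and a_{n+1} ≥ 4. Then the open ball centered at any point x of the cylinder C_{n+1}(a_1,…,a_{n+1}) of radius |C_{n+1}(a_1,…,a_{n+1})| is contained in the union of the four cylinders C_{n+1}(a_1,…,a_n, a_{n+1}+j) for j ∈ {−1, 0, 1, 2}. -/

import Mathlib

/-- The Lüroth map L(x) = ⌊1/x⌋(⌊1/x⌋+1)x − ⌊1/x⌋, with L(0) = 0. -/
noncomputable def lurothL (x : ℝ) : ℝ :=
  if x = 0 then 0 else (⌊1 / x⌋ : ℝ) * ((⌊1 / x⌋ : ℝ) + 1) * x - (⌊1 / x⌋ : ℝ)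

/-- The n-th Lüroth digit (1-indexed): a_n(x) = ⌊1/L^{n−1}(x)⌋ + 1. -/
noncomputable def lurothDigit (n : ℕ) (x : ℝ) : ℕ :=
  (⌊1 / lurothL^[n - 1] x⌋).toNat + 1

/-- The cylinder of a word (b_1, …, b_k). -/
noncomputable def lurothCyl (b : ℕ → ℕ) (k : ℕ) : Set ℝ :=
  {x ∈ Set.Ioc (0 : ℝ) 1 | ∀ j ∈ Finset.Icc 1 k, lurothDigit j x = b j}

/-!
The branch of the Lüroth map `L` on `(1/m, 1/(m-1)]` is inverted by the affine map
`ψ_m t = 1/m + t/(m(m-1))`, so a cylinder `C_k(b)` is the image of `(0,1]` under the affine map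
`ψ_{b_1} ∘ ⋯ ∘ ψ_{b_k}`, whose slope is `|C_k(b)|`. Hence `C_{n+1}(a_1,…,a_n,v)` is the image of
the first-digit interval `(1/v, 1/(v-1)]` under the affine map `Φ = ψ_{a_1} ∘ ⋯ ∘ ψ_{a_n}`, and `Φ`
carries balls to balls. This reduces the theorem to `n = 0`: the ball of radius `1/(c(c-1))`
around a point of `(1/c, 1/(c-1)]` lies in `(1/(c+2), 1/(c-2)]`, which needs `c ≥ 4` on the left.
-/

open Set Function Metric

theorem image_affine_ball {P : ℝ} (hP : 0 < P) (q t r : ℝ) :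
    (P * · + q) '' ball t r = ball (P * t + q) (P * r) := by
  rw [Real.ball_eq_Ioo, Real.ball_eq_Ioo, image_affine_Ioo hP]
  congr 1 <;> ring

theorem forall_mem_Icc_one_succ_iff {p : ℕ → Prop} {k : ℕ} :
    (∀ j ∈ Finset.Icc 1 (k + 1), p j) ↔ p 1 ∧ ∀ j ∈ Finset.Icc 1 k, p (j + 1) := by
  refine ⟨fun h => ⟨h 1 (by simp), fun j hj => h (j + 1) ?_⟩, fun ⟨h1, h⟩ j hj => ?_⟩
  · simp only [Finset.mem_Icc] at hj ⊢; omega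
  · obtain ⟨hj1, hjk⟩ := Finset.mem_Icc.1 hj
    rcases j with _ | _ | j
    · omega
    · exact h1
    · exact h (j + 1) (Finset.mem_Icc.2 ⟨by omega, by omega⟩)

theorem lurothDigit_succ {j : ℕ} (hj : 1 ≤ j) (x : ℝ) :
    lurothDigit (j + 1) x = lurothDigit j (lurothL x) := by
  obtain ⟨i, rfl⟩ := Nat.exists_eq_add_of_le' hj
  simp [lurothDigit, iterate_succ_apply]

section FirstDigit

variable {x : ℝ}

theorem floor_one_div_bounds_of_mem_Ioc (hx : x ∈ Ioc (0 : ℝ) 1) :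
    (1 : ℝ) ≤ ⌊1 / x⌋ ∧ (⌊1 / x⌋ : ℝ) * x ≤ 1 ∧ 1 < ((⌊1 / x⌋ : ℝ) + 1) * x := by
  obtain ⟨hx0, hx1⟩ := hx
  have hfloor_le := Int.floor_le (1 / x)
  have hlt_floor := Int.lt_floor_add_one (1 / x)
  refine ⟨?_, ?_, ?_⟩
  · exact_mod_cast Int.le_floor.2 (by exact_mod_cast one_le_one_div hx0 hx1)
  · rwa [le_div_iff₀ hx0] at hfloor_le
  · rwa [div_lt_iff₀ hx0] at hlt_floor

theorem lurothDigit_one_cast (hx : 0 < x) : (lurothDigit 1 x : ℝ) = ⌊1 / x⌋ + 1 := by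
  have hfloor : 0 ≤ ⌊1 / x⌋ := Int.floor_nonneg.2 (by positivity)
  simp only [lurothDigit, Nat.sub_self, iterate_zero_apply]
  rw [Nat.cast_add, Nat.cast_one, ← Int.cast_natCast, Int.toNat_of_nonneg hfloor]

theorem lurothL_of_pos (hx : 0 < x) :
    lurothL x = (⌊1 / x⌋ : ℝ) * ((⌊1 / x⌋ : ℝ) + 1) * x - ⌊1 / x⌋ :=
  if_neg hx.ne'

theorem lurothL_mem_Ioc (hx : x ∈ Ioc (0 : ℝ) 1) : lurothL x ∈ Ioc (0 : ℝ) 1 := by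
  obtain ⟨hq1, hqx, hqx'⟩ := floor_one_div_bounds_of_mem_Ioc hx
  rw [lurothL_of_pos hx.1]
  constructor <;> nlinarith

end FirstDigit

noncomputable def lurothBranch (m : ℕ) (t : ℝ) : ℝ :=
  1 / m + t / (m * (m - 1))

section Branch

variable {m : ℕ} {t : ℝ}

theorem lurothBranch_lurothL {x : ℝ} (hx : x ∈ Ioc (0 : ℝ) 1) :
    lurothBranch (lurothDigit 1 x) (lurothL x) = x := by
  obtain ⟨hq1, -, -⟩ := floor_one_div_bounds_of_mem_Ioc hx
  rw [lurothBranch, lurothDigit_one_cast hx.1, lurothL_of_pos hx.1]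
  generalize (⌊1 / x⌋ : ℝ) = q at hq1 ⊢
  have hq0 : q ≠ 0 := by positivity
  have hq1' : q + 1 ≠ 0 := by positivity
  rw [add_sub_cancel_right]
  field_simp
  ring

theorem lurothBranch_eq_affine (m : ℕ) :
    lurothBranch m = ((1 / ((m : ℝ) * ((m : ℝ) - 1))) * · + 1 / (m : ℝ)) := by
  funext t
  rw [lurothBranch]
  ring

theorem lurothBranch_image_Ioc (hm : 2 ≤ m) :
    lurothBranch m '' Ioc 0 1 = Ioc (1 / (m : ℝ)) (1 / ((m : ℝ) - 1)) := by
  have hm' : (2 : ℝ) ≤ m := by exact_mod_cast hm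
  have hm1 : (m : ℝ) - 1 ≠ 0 := by linarith
  have hslope : 0 < 1 / ((m : ℝ) * ((m : ℝ) - 1)) := one_div_pos.2 (by nlinarith)
  rw [lurothBranch_eq_affine, image_affine_Ioc hslope]
  congr 1
  · ring
  · field_simp
    ring

theorem lurothBranch_mem_Ioc (hm : 2 ≤ m) (ht : t ∈ Ioc (0 : ℝ) 1) :
    lurothBranch m t ∈ Ioc (0 : ℝ) 1 := by
  have hm' : (2 : ℝ) ≤ m := by exact_mod_cast hm
  obtain ⟨hlo, hhi⟩ : lurothBranch m t ∈ Ioc (1 / (m : ℝ)) (1 / ((m : ℝ) - 1)) :=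
    lurothBranch_image_Ioc hm ▸ mem_image_of_mem _ ht
  have : 1 / ((m : ℝ) - 1) ≤ 1 := by rw [div_le_one (by linarith)]; linarith
  exact ⟨lt_trans (by positivity) hlo, hhi.trans this⟩

theorem floor_one_div_lurothBranch (hm : 2 ≤ m) (ht : t ∈ Ioc (0 : ℝ) 1) :
    ⌊1 / lurothBranch m t⌋ = (m : ℤ) - 1 := by
  obtain ⟨ht0, ht1⟩ := ht
  have hm' : (2 : ℝ) ≤ m := by exact_mod_cast hm
  have hm1 : (m : ℝ) - 1 ≠ 0 := by linarith
  have hmt : (m : ℝ) - 1 + t ≠ 0 := by linarith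
  have hψ : 1 / lurothBranch m t = m * (m - 1) / (m - 1 + t) := by
    rw [lurothBranch]
    field_simp
  rw [Int.floor_eq_iff, hψ, le_div_iff₀ (by linarith), div_lt_iff₀ (by linarith)]
  push_cast
  constructor <;> nlinarith

theorem lurothDigit_one_lurothBranch (hm : 2 ≤ m) (ht : t ∈ Ioc (0 : ℝ) 1) :
    lurothDigit 1 (lurothBranch m t) = m := by
  simp only [lurothDigit, Nat.sub_self, iterate_zero_apply, floor_one_div_lurothBranch hm ht]
  omega

theorem lurothL_lurothBranch (hm : 2 ≤ m) (ht : t ∈ Ioc (0 : ℝ) 1) :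
    lurothL (lurothBranch m t) = t := by
  have hm' : (2 : ℝ) ≤ m := by exact_mod_cast hm
  have hm1 : (m : ℝ) - 1 ≠ 0 := by linarith
  rw [lurothL_of_pos (lurothBranch_mem_Ioc hm ht).1, floor_one_div_lurothBranch hm ht, lurothBranch]
  push_cast
  field_simp
  ring

end Branch

theorem lurothCyl_succ {b : ℕ → ℕ} (hb : 2 ≤ b 1) (k : ℕ) :
    lurothCyl b (k + 1) = lurothBranch (b 1) '' lurothCyl (fun j => b (j + 1)) k := by
  ext x
  simp only [lurothCyl, mem_sep_iff, forall_mem_Icc_one_succ_iff, mem_image]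
  constructor
  · rintro ⟨hx, hdig1, hdig⟩
    refine ⟨lurothL x, ⟨lurothL_mem_Ioc hx, fun j hj => ?_⟩, hdig1 ▸ lurothBranch_lurothL hx⟩
    rw [← lurothDigit_succ (Finset.mem_Icc.1 hj).1]
    exact hdig j hj
  · rintro ⟨y, ⟨hy, hdig⟩, rfl⟩
    refine ⟨lurothBranch_mem_Ioc hb hy, lurothDigit_one_lurothBranch hb hy, fun j hj => ?_⟩
    rw [lurothDigit_succ (Finset.mem_Icc.1 hj).1, lurothL_lurothBranch hb hy]
    exact hdig j hj

noncomputable def lurothCylMap : (ℕ → ℕ) → ℕ → ℝ → ℝ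
  | _, 0 => id
  | b, k + 1 => lurothBranch (b 1) ∘ lurothCylMap (fun j => b (j + 1)) k

noncomputable def lurothCylLength (b : ℕ → ℕ) (k : ℕ) : ℝ :=
  ∏ j ∈ Finset.Icc 1 k, 1 / ((b j : ℝ) * ((b j : ℝ) - 1))

theorem lurothCylLength_succ (b : ℕ → ℕ) (k : ℕ) :
    lurothCylLength b (k + 1) = lurothCylLength b k * (1 / ((b (k + 1) : ℝ) * (b (k + 1) - 1))) :=
  Finset.prod_Icc_succ_top (by omega) _

theorem lurothCylLength_pos {b : ℕ → ℕ} {k : ℕ} (hb : ∀ j ∈ Finset.Icc 1 k, 2 ≤ b j) :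
    0 < lurothCylLength b k :=
  Finset.prod_pos fun j hj => by
    have : (2 : ℝ) ≤ b j := by exact_mod_cast hb j hj
    have : (0 : ℝ) < b j * (b j - 1) := by nlinarith
    positivity

theorem lurothCyl_eq_image (k : ℕ) {b : ℕ → ℕ} (hb : ∀ j ∈ Finset.Icc 1 k, 2 ≤ b j) :
    lurothCyl b k = lurothCylMap b k '' Ioc 0 1 := by
  induction k generalizing b with
  | zero => ext; simp [lurothCyl, lurothCylMap]
  | succ k ih =>
    rw [forall_mem_Icc_one_succ_iff] at hb
    rw [lurothCyl_succ hb.1, ih hb.2, lurothCylMap, image_comp]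

theorem lurothCylMap_succ (b : ℕ → ℕ) (k : ℕ) :
    lurothCylMap b (k + 1) = lurothCylMap b k ∘ lurothBranch (b (k + 1)) := by
  induction k generalizing b with
  | zero => rfl
  | succ k ih => rw [lurothCylMap, ih, lurothCylMap, comp_assoc]

theorem lurothCylMap_congr {k : ℕ} {b c : ℕ → ℕ} (h : ∀ j ∈ Finset.Icc 1 k, b j = c j) :
    lurothCylMap b k = lurothCylMap c k := by
  induction k generalizing b c with
  | zero => rfl
  | succ k ih =>
    rw [forall_mem_Icc_one_succ_iff] at h
    rw [lurothCylMap, lurothCylMap, h.1, ih h.2]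

theorem lurothCylMap_eq_affine (b : ℕ → ℕ) (k : ℕ) :
    lurothCylMap b k = (lurothCylLength b k * · + lurothCylMap b k 0) := by
  induction k with
  | zero => funext t; simp [lurothCylMap, lurothCylLength]
  | succ k ih =>
    funext t
    rw [lurothCylMap_succ, comp_apply, comp_apply, ih, lurothCylLength_succ, lurothBranch,
      lurothBranch]
    ring

theorem lurothCylMap_image_ball {b : ℕ → ℕ} {k : ℕ} (hb : ∀ j ∈ Finset.Icc 1 k, 2 ≤ b j)
    (t r : ℝ) :
    lurothCylMap b k '' ball t r = ball (lurothCylMap b k t) (lurothCylLength b k * r) := by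
  rw [lurothCylMap_eq_affine, image_affine_ball (lurothCylLength_pos hb)]

theorem lurothCyl_update_eq_image {n : ℕ} {a : ℕ → ℕ} (ha : ∀ j ∈ Finset.Icc 1 n, 2 ≤ a j)
    {v : ℕ} (hv : 2 ≤ v) :
    lurothCyl (update a (n + 1) v) (n + 1) =
      lurothCylMap a n '' Ioc (1 / (v : ℝ)) (1 / ((v : ℝ) - 1)) := by
  have hagree : ∀ j ∈ Finset.Icc 1 n, update a (n + 1) v j = a j := fun j hj =>
    update_of_ne (by simp only [Finset.mem_Icc] at hj; omega) _ _
  have hdig : ∀ j ∈ Finset.Icc 1 (n + 1), 2 ≤ update a (n + 1) v j := by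
    intro j hj
    rcases eq_or_ne j (n + 1) with rfl | hne
    · rwa [update_self]
    · rw [update_of_ne hne]
      exact ha j (by simp only [Finset.mem_Icc] at hj ⊢; omega)
  rw [lurothCyl_eq_image _ hdig, lurothCylMap_succ, image_comp, update_self,
    lurothBranch_image_Ioc hv, lurothCylMap_congr hagree]

theorem Ioc_one_div_subset_iUnion (m N : ℕ) :
    Ioc (1 / ((m + N : ℕ) : ℝ)) (1 / (m : ℝ)) ⊆
      ⋃ v ∈ Icc (m + 1) (m + N), Ioc (1 / (v : ℝ)) (1 / ((v : ℝ) - 1)) := by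
  intro y hy
  obtain ⟨i, hi, hyi⟩ := mem_iUnion₂.1
    (Ioc_subset_biUnion_Ioc N (fun i => 1 / ((m + N - i : ℕ) : ℝ)) (by simpa using hy))
  rw [Finset.mem_range] at hi
  refine mem_iUnion₂.2 ⟨m + N - i, ⟨by omega, by omega⟩, ?_⟩
  have : ((m + N - (i + 1) : ℕ) : ℝ) = ((m + N - i : ℕ) : ℝ) - 1 := by
    rw [show m + N - (i + 1) = m + N - i - 1 by omega, Nat.cast_pred (by omega)]
  simpa [this] using hyi

theorem ball_subset_iUnion_Ioc_one_div {c : ℕ} (hc : 4 ≤ c) {t : ℝ}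
    (ht : t ∈ Ioc (1 / (c : ℝ)) (1 / ((c : ℝ) - 1))) :
    ball t (1 / ((c : ℝ) * ((c : ℝ) - 1))) ⊆
      ⋃ v ∈ Icc (c - 1) (c + 2), Ioc (1 / (v : ℝ)) (1 / ((v : ℝ) - 1)) := by
  obtain ⟨m, rfl⟩ : ∃ m, c = m + 2 := ⟨c - 2, by omega⟩
  refine Subset.trans ?_ (Ioc_one_div_subset_iUnion m 4)
  have hm : (2 : ℝ) ≤ m := by exact_mod_cast (by omega : 2 ≤ m)
  have hleft : 1 / ((m : ℝ) + 4) ≤ 1 / ((m : ℝ) + 2) - 1 / ((m + 2) * (m + 1)) := by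
    rw [show 1 / ((m : ℝ) + 2) - 1 / ((m + 2) * (m + 1)) = m / ((m + 2) * (m + 1)) by
      field_simp; ring, div_le_div_iff₀ (by positivity) (by positivity)]
    nlinarith
  have hright : 1 / ((m : ℝ) + 1) + 1 / ((m + 2) * (m + 1)) ≤ 1 / m := by
    rw [show 1 / ((m : ℝ) + 1) + 1 / ((m + 2) * (m + 1)) = (m + 3) / ((m + 2) * (m + 1)) by
      field_simp; ring, div_le_div_iff₀ (by positivity) (by positivity)]
    nlinarith
  push_cast at ht ⊢
  rw [show (m : ℝ) + 2 - 1 = m + 1 by ring] at ht ⊢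
  rw [Real.ball_eq_Ioo]
  rintro y ⟨hy1, hy2⟩
  constructor <;> linarith [ht.1, ht.2]

theorem luroth_ball_subset_four_cylinders_general (n : ℕ) (a : ℕ → ℕ)
    (ha : ∀ j ∈ Finset.Icc 1 (n + 1), 2 ≤ a j) (ha4 : 4 ≤ a (n + 1))
    (x : ℝ) (hx : x ∈ lurothCyl a (n + 1)) :
    Metric.ball x (∏ j ∈ Finset.Icc 1 (n + 1), 1 / ((a j : ℝ) * ((a j : ℝ) - 1)))
      ⊆ ⋃ b ∈ Set.Icc (a (n + 1) - 1) (a (n + 1) + 2),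
          lurothCyl (Function.update a (n + 1) b) (n + 1) := by
  have ha' : ∀ j ∈ Finset.Icc 1 n, 2 ≤ a j := fun j hj =>
    ha j (Finset.Icc_subset_Icc_right (by omega) hj)
  have hx' : x ∈ lurothCyl (update a (n + 1) (a (n + 1))) (n + 1) := by rwa [update_eq_self]
  rw [lurothCyl_update_eq_image ha' (by omega)] at hx'
  obtain ⟨t, ht, rfl⟩ := hx'
  change ball _ (lurothCylLength a (n + 1)) ⊆ _
  rw [lurothCylLength_succ, ← lurothCylMap_image_ball ha']
  rintro _ ⟨s, hs, rfl⟩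
  obtain ⟨v, hv, hsv⟩ := mem_iUnion₂.1 (ball_subset_iUnion_Ioc_one_div ha4 ht hs)
  refine mem_iUnion₂.2 ⟨v, hv, ?_⟩
  rw [lurothCyl_update_eq_image ha' (by simp only [mem_Icc] at hv; omega)]
  exact mem_image_of_mem _ hsv

/-- For n ≥ 1, Lüroth digits a_j ≥ 2 with a_{n+1} ≥ 4, and any
x ∈ C_{n+1}(a_1,…,a_{n+1}), the open ball at x of radius
|C_{n+1}(a_1,…,a_{n+1})| is contained in the union of the four cylinders
C_{n+1}(a_1,…,a_n,a_{n+1}+j), j ∈ {−1,0,1,2}. -/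
theorem luroth_ball_subset_four_cylinders (n : ℕ) (hn : 1 ≤ n) (a : ℕ → ℕ)
    (ha : ∀ j ∈ Finset.Icc 1 (n + 1), 2 ≤ a j) (ha4 : 4 ≤ a (n + 1))
    (x : ℝ) (hx : x ∈ lurothCyl a (n + 1)) :
    Metric.ball x (∏ j ∈ Finset.Icc 1 (n + 1), 1 / ((a j : ℝ) * ((a j : ℝ) - 1)))
      ⊆ ⋃ b ∈ Set.Icc (a (n + 1) - 1) (a (n + 1) + 2),
          lurothCyl (Function.update a (n + 1) b) (n + 1) :=
  luroth_ball_subset_four_cylinders_general n a ha ha4 x hx
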